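/- Assume the cost c(x,y) = h(x−y) satisfies (H1)–(H3). Let Q be a Borel probability measure on ℝ^d absolutely continuous with respect to Lebesgue measure and such that Q gives zero mass to the boundary of its topological support, and let P be a Borel probability measure on ℝ^d. Fix u ∈ ℝ^d, ε ∈ (0,1) and α > 0 with TD(u;Q) = ε − α, and let v_u ∈ S^{d−1} attain the infimum in the definition of TD(u;Q), i.e., Q({x : ⟨v_u, x−u⟩ ≤ 0}) = TD(u;Q). For n ∈ ℕ set z_n = u − ∇h*(n v_u). Then for any sequence f_n of Kantorovich potentials for (Q, (1−ε)P + ε δ_{z_n}), the sequence of sets {∂^c f_n(u)} escapes to the horizon. -/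

import Mathlib

open Filter MeasureTheory Bornology Topology Set
open scoped RealInnerProductSpace ENNReal BigOperators Classical

noncomputable section

abbrev Euc (d : ℕ) := EuclideanSpace ℝ (Fin d)

/-- The cost function `c(x,y) = h(x-y)`. -/
def cost {d : ℕ} (h : Euc d → ℝ) (x y : Euc d) : ℝ := h (x - y)

/-- The truncated cone `Cone(r, θ, z, p)`. -/
def TruncCone {d : ℕ} (r θ : ℝ) (z p : Euc d) : Set (Euc d) :=
  {x | ‖x - p‖ * ‖z‖ * Real.cos (θ / 2) ≤ ⟪z, x - p⟫ ∧ ⟪z, x - p⟫ ≤ r * ‖z‖}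

/-- (H1): `h` is strictly convex. -/
def H1 {d : ℕ} (h : Euc d → ℝ) : Prop := StrictConvexOn ℝ Set.univ h

/-- (H2): for every height `r > 0` and angle `θ ∈ (0, π)` there is `M > 0` such that for every
`p` with `‖p‖ > M` there is a truncated cone with vertex `p` on which `h` attains its maximum
at `p`. -/
def H2 {d : ℕ} (h : Euc d → ℝ) : Prop :=
  ∀ r : ℝ, 0 < r → ∀ θ : ℝ, θ ∈ Set.Ioo 0 Real.pi → ∃ M : ℝ, 0 < M ∧
    ∀ p : Euc d, M < ‖p‖ → ∃ z : Euc d, z ≠ 0 ∧ ∀ x ∈ TruncCone r θ z p, h x ≤ h p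

/-- (H3): `h(x)/‖x‖ → ∞` as `‖x‖ → ∞`. -/
def H3 {d : ℕ} (h : Euc d → ℝ) : Prop :=
  ∀ C : ℝ, ∃ R : ℝ, ∀ x : Euc d, R ≤ ‖x‖ → C * ‖x‖ ≤ h x

/-- A function `f : ℝ^d → ℝ ∪ {-∞}` is `c`-concave if it is an infimum of functions
`x ↦ c(x,y) - t` over a nonempty family `𝒯` of pairs `(y,t)`. -/
def IsCConcave {d : ℕ} (h : Euc d → ℝ) (f : Euc d → EReal) : Prop :=
  ∃ T : Set (Euc d × ℝ), T.Nonempty ∧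
    ∀ x : Euc d, f x = ⨅ p ∈ T, ((cost h x p.1 - p.2 : ℝ) : EReal)

/-- The `c`-superdifferential of `f`, as a subset of `ℝ^d × ℝ^d`. -/
def CSuperdiff {d : ℕ} (h : Euc d → ℝ) (f : Euc d → EReal) : Set (Euc d × Euc d) :=
  {q | ∀ z : Euc d, f z ≤ f q.1 + ((cost h z q.2 - cost h q.1 q.2 : ℝ) : EReal)}

/-- `∂^c f(x)`. -/
def CSuperdiffAt {d : ℕ} (h : Euc d → ℝ) (f : Euc d → EReal) (x : Euc d) : Set (Euc d) :=
  {y | (x, y) ∈ CSuperdiff h f}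

/-- `∂^c f(U) = ⋃_{x ∈ U} ∂^c f(x)`. -/
def CSuperdiffImg {d : ℕ} (h : Euc d → ℝ) (f : Euc d → EReal) (U : Set (Euc d)) :
    Set (Euc d) :=
  ⋃ x ∈ U, CSuperdiffAt h f x

/-- `dom(f) = {x : f(x) > -∞}`. -/
def edom {d : ℕ} (f : Euc d → EReal) : Set (Euc d) := {x | f x ≠ ⊥}

/-- A sequence of sets escapes to the horizon if it eventually avoids every ball
`B_R(0)`. -/
def EscapesToHorizon {α : Type*} [Norm α] (A : ℕ → Set α) : Prop :=
  ∀ R : ℝ, 0 < R → ∃ N : ℕ, ∀ n, N ≤ n → ∀ a ∈ A n, R ≤ ‖a‖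

/-- No subsequence of the sequence of sets escapes to the horizon. -/
def NoSubseqEscapes {α : Type*} [Norm α] (A : ℕ → Set α) : Prop :=
  ∀ φ : ℕ → ℕ, StrictMono φ → ¬ EscapesToHorizon fun k => A (φ k)

/-- A Kantorovich potential for `(Q, P')`: a `c`-concave function `f` whose `c`-superdifferential
is `Q`-a.e. a singleton `{T x}` and whose (a.e. defined) selection `T` pushes `Q` forward
to `P'`. -/
def IsKantorovichPotential {d : ℕ} (h : Euc d → ℝ) (Q P' : Measure (Euc d))
    (f : Euc d → EReal) : Prop :=
  IsCConcave h f ∧ ∃ T : Euc d → Euc d,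
    (∀ᵐ x ∂Q, CSuperdiffAt h f x = {T x}) ∧ Measure.map T Q = P'

/-- The Tukey depth `TD(u;Q) = inf_{v ∈ S^{d-1}} Q {x : ⟨v, x-u⟩ ≤ 0}`. -/
def tukeyDepth {d : ℕ} (Q : Measure (Euc d)) (u : Euc d) : ℝ≥0∞ :=
  ⨅ v ∈ {v : Euc d | ‖v‖ = 1}, Q {x | ⟪v, x - u⟫ ≤ 0}

/-- The set `S_ε(u)` of possible values at `u` of `c`-superdifferentials of Kantorovich
potentials from `Q` to an `ε`-contamination of `P`. -/
def contamSet {d : ℕ} (h : Euc d → ℝ) (Q P : Measure (Euc d)) (ε : ℝ) (u : Euc d) :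
    Set (Euc d) :=
  {y | ∃ μ : Measure (Euc d), IsProbabilityMeasure μ ∧ ∃ f : Euc d → EReal,
    IsKantorovichPotential h Q (ENNReal.ofReal (1 - ε) • P + ENNReal.ofReal ε • μ) f ∧
    y ∈ CSuperdiffAt h f u}

/-- Breakdown point `BP(u) = inf {ε ∈ (0,1) : S_ε(u) is unbounded}`. -/
def breakdownPoint {d : ℕ} (h : Euc d → ℝ) (Q P : Measure (Euc d)) (u : Euc d) : ℝ≥0∞ :=
  ⨅ ε ∈ {ε : ℝ | 0 < ε ∧ ε < 1 ∧ ¬ IsBounded (contamSet h Q P ε u)}, ENNReal.ofReal ε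

/-- `σ` is an optimal assignment for source points `u` and target points `x`. -/
def IsOptAssign {d n : ℕ} (h : Euc d → ℝ) (u x : Fin n → Euc d)
    (σ : Equiv.Perm (Fin n)) : Prop :=
  ∀ τ : Equiv.Perm (Fin n), ∑ i, cost h (u i) (x (σ i)) ≤ ∑ i, cost h (u i) (x (τ i))

/-- The dataset `x'` shares at least `k` atoms (with multiplicity) with the dataset `x`
of distinct points. -/
def SharesAtoms {d n : ℕ} (x x' : Fin n → Euc d) (k : ℕ) : Prop :=
  ∃ s : Finset (Fin n), k ≤ s.card ∧ ∃ g : Fin n → Fin n,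
    Set.InjOn g ↑s ∧ ∀ i ∈ s, x' (g i) = x i

/-- The set of values `x'_{σ(j)}` over datasets `x'` sharing at least `n - ℓ` atoms with `x`
and optimal assignments `σ` for `(u, x')`. -/
def fsBadSet {d n : ℕ} (h : Euc d → ℝ) (u x : Fin n → Euc d) (j : Fin n) (ℓ : ℕ) :
    Set (Euc d) :=
  {y | ∃ (x' : Fin n → Euc d) (σ : Equiv.Perm (Fin n)),
    SharesAtoms x x' (n - ℓ) ∧ IsOptAssign h u x' σ ∧ y = x' (σ j)}

/-- Finite sample (replacement) breakdown point of `T_{Q_n → P_n}(u_j)`. -/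
def finiteSampleBP {d n : ℕ} (h : Euc d → ℝ) (u x : Fin n → Euc d) (j : Fin n) : ℝ :=
  ((sInf {ℓ : ℕ | 1 ≤ ℓ ∧ ℓ ≤ n ∧ ¬ IsBounded (fsBadSet h u x j ℓ)} : ℕ) : ℝ) / n

/-- Tukey depth of `a` with respect to the empirical measure of `u_1, …, u_n`. -/
def empTD {d n : ℕ} (u : Fin n → Euc d) (a : Euc d) : ℝ :=
  ⨅ v : {v : Euc d // ‖v‖ = 1},
    ((Finset.univ.filter fun i => ⟪(v : Euc d), u i - a⟫ ≤ 0).card : ℝ) / n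

/-- Lower Tukey depth of `a` with respect to the empirical measure of `u_1, …, u_n`. -/
def empTDlt {d n : ℕ} (u : Fin n → Euc d) (a : Euc d) : ℝ :=
  ⨅ v : {v : Euc d // ‖v‖ = 1},
    ((Finset.univ.filter fun i => ⟪(v : Euc d), u i - a⟫ < 0).card : ℝ) / n

/-- Points in general position: every subset of cardinality at most `d+1` is affinely
independent. -/
def InGeneralPosition {d n : ℕ} (u : Fin n → Euc d) : Prop :=
  ∀ s : Finset (Fin n), s.card ≤ d + 1 → AffineIndependent ℝ fun i : s => u (i : Fin n)

/-- Convex conjugate `h*(y) = sup_x (⟨x,y⟩ - h(x))`. -/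
def convConj {d : ℕ} (h : Euc d → ℝ) (y : Euc d) : ℝ := ⨆ x : Euc d, (⟪x, y⟫ - h x)

/-- Topological support of a measure. -/
def measSupport {d : ℕ} (Q : Measure (Euc d)) : Set (Euc d) :=
  {x | ∀ U : Set (Euc d), IsOpen U → x ∈ U → 0 < Q U}

/-- A set `Γ ⊂ ℝ^d × ℝ^d` is `c`-cyclically monotone. -/
def CCyclMono {d : ℕ} (h : Euc d → ℝ) (Γ : Set (Euc d × Euc d)) : Prop :=
  ∀ (N : ℕ) (p : Fin N → Euc d × Euc d), (∀ i, p i ∈ Γ) →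
    ∀ τ : Equiv.Perm (Fin N),
      ∑ i, cost h (p i).1 (p i).2 ≤ ∑ i, cost h (p i).1 (p (τ i)).2


/-!
Write `g_n = ∇h*(n v) = u - z_n`. It maximises `⟪·, n v⟫ - h`, so
`h (g_n + w) - h g_n ≥ n ⟪v, w⟫` for all `w`. The half-space `{⟪v, x - u⟫ ≤ 0}` has `Q`-mass
`ε - α < ε`, while the atom `z_n` receives mass `ε`; hence, for some `δ > 0` independent of `n`,
each potential `f_n` sends a point `x` with `⟪v, x - u⟫ > δ` and `‖x‖ ≤ δ⁻¹` to `z_n`.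
Two-point `c`-cyclical monotonicity of `∂^c f_n` then gives, for `y ∈ ∂^c f_n(u)`,
`n δ ≤ c(x, z_n) - c(u, z_n) ≤ c(x, y) - c(u, y)`, and the right-hand side stays bounded as long
as `y` does.
-/

theorem MapClusterPt.prodMk_of_tendsto {X Y α : Type*} [TopologicalSpace X] [TopologicalSpace Y]
    {l : Filter α} {f : α → X} {g : α → Y} {x : X} {y : Y} (hg : MapClusterPt y l g)
    (hf : Tendsto f l (𝓝 x)) : MapClusterPt (x, y) l fun a => (f a, g a) := by
  rw [((𝓝 x).basis_sets.prod_nhds (𝓝 y).basis_sets).mapClusterPt_iff_frequently]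
  rintro ⟨s, t⟩ ⟨hs, ht⟩
  exact ((mapClusterPt_iff_frequently.mp hg) t ht).and_eventually (hf hs) |>.mono
    fun a ha => ⟨ha.2, ha.1⟩

theorem exists_pos_measure_union_closedBall_compl_lt {X : Type*} [PseudoMetricSpace X]
    [MeasurableSpace X] [OpensMeasurableSpace X] (μ : Measure X) [IsFiniteMeasure μ]
    {g : X → ℝ} (hg : Measurable g) (x₀ : X) {c : ℝ≥0∞} (hc : μ {x | g x ≤ 0} < c) :
    ∃ δ > 0, μ ({x | g x ≤ δ} ∪ (Metric.closedBall x₀ δ⁻¹)ᶜ) < c := by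
  set s : ℝ → Set X := fun r => {x | g x ≤ r} ∪ (Metric.closedBall x₀ r⁻¹)ᶜ
  have hinter : ⋂ r > 0, s r = {x | g x ≤ 0} := by
    ext x
    simp only [s, mem_iInter, mem_union, mem_ofPred_eq, mem_compl_iff, Metric.mem_closedBall,
      not_le]
    refine ⟨fun hx => not_lt.mp fun hgx => ?_, fun hx r hr => Or.inl (hx.trans hr.le)⟩
    have hr : 0 < min (g x / 2) (dist x x₀ + 1)⁻¹ := by positivity
    rcases hx _ hr with hlt | hlt
    · linarith [min_le_left (g x / 2) (dist x x₀ + 1)⁻¹]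
    · have := le_inv_comm₀ hr (by positivity) |>.mp (min_le_right (g x / 2) (dist x x₀ + 1)⁻¹)
      linarith
  have hlim := tendsto_measure_biInter_gt (μ := μ) (s := s) (a := 0)
    (fun r _ => ((measurableSet_le hg measurable_const).union
      Metric.isClosed_closedBall.measurableSet.compl).nullMeasurableSet)
    (fun i j hi hij => union_subset_union (fun x hx => le_trans hx hij)
      (compl_subset_compl.mpr (Metric.closedBall_subset_closedBall (inv_anti₀ hi hij))))
    ⟨1, one_pos, measure_ne_top μ _⟩
  rw [hinter] at hlim
  obtain ⟨δ, hδc, hδ⟩ := ((hlim.eventually (gt_mem_nhds hc)).and self_mem_nhdsWithin).exists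
  exact ⟨δ, hδ, hδc⟩

section ConvexConjugate

variable {d : ℕ} {h : Euc d → ℝ}

theorem H1.continuous (h1 : H1 h) : Continuous h :=
  continuousOn_univ.mp (h1.convexOn.continuousOn isOpen_univ)

theorem H3.tendsto_sub_inner (h3 : H3 h) (q : Euc d) :
    Tendsto (fun x => h x - ⟪x, q⟫) (cocompact (Euc d)) atTop := by
  obtain ⟨R, hR⟩ := h3 (‖q‖ + 1)
  refine tendsto_atTop_mono' _ ?_ tendsto_norm_cocompact_atTop
  filter_upwards [tendsto_norm_cocompact_atTop.eventually_ge_atTop R] with x hx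
  nlinarith [hR x hx, real_inner_le_norm x q, norm_nonneg x]

theorem exists_isMinOn_sub_inner (h1 : H1 h) (h3 : H3 h) (q : Euc d) :
    ∃ x, IsMinOn (fun y => h y - ⟪y, q⟫) univ x := by
  obtain ⟨x, hx⟩ := (h1.continuous.sub (continuous_id.inner continuous_const)).exists_forall_le
    (h3.tendsto_sub_inner q)
  exact ⟨x, fun y _ => hx y⟩

theorem H1.eq_of_isMinOn_sub_inner (h1 : H1 h) {q x x' : Euc d}
    (hx : IsMinOn (fun y => h y - ⟪y, q⟫) univ x)
    (hx' : IsMinOn (fun y => h y - ⟪y, q⟫) univ x') : x = x' := by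
  have hlin : ConcaveOn ℝ univ fun y : Euc d => ⟪y, q⟫ := by
    refine ⟨convex_univ, fun y _ y' _ a b _ _ _ => ?_⟩
    simp [inner_add_left, real_inner_smul_left]
  exact (h1.sub_concaveOn hlin).eq_of_isMinOn hx hx' (mem_univ x) (mem_univ x')

theorem H3.norm_le_of_isMinOn_sub_inner (h3 : H3 h) (r : ℝ) :
    ∃ C, ∀ q x : Euc d, ‖q‖ ≤ r → IsMinOn (fun y => h y - ⟪y, q⟫) univ x → ‖x‖ ≤ C := by
  obtain ⟨R, hR⟩ := h3 (r + 1)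
  refine ⟨max R (h 0), fun q x hq hx => ?_⟩
  by_contra! hC
  have hmin : h x - ⟪x, q⟫ ≤ h 0 := by simpa using hx (mem_univ 0)
  nlinarith [hR x ((le_max_left _ _).trans hC.le), real_inner_le_norm x q, norm_nonneg x,
    le_max_right R (h 0)]

theorem isClosed_setOf_isMinOn_sub_inner (hc : Continuous h) :
    IsClosed {p : Euc d × Euc d | IsMinOn (fun y => h y - ⟪y, p.1⟫) univ p.2} := by
  simp only [IsMinOn, IsMinFilter, eventually_principal, mem_univ, forall_const, ofPred_forall]
  exact isClosed_iInter fun y => isClosed_le (by fun_prop) (by fun_prop)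


theorem H1.continuousAt_of_isMinOn_sub_inner (h1 : H1 h) (h3 : H3 h) {m : Euc d → Euc d}
    (hm : ∀ q, IsMinOn (fun y => h y - ⟪y, q⟫) univ (m q)) (q : Euc d) : ContinuousAt m q := by
  obtain ⟨C, hC⟩ := h3.norm_le_of_isMinOn_sub_inner (‖q‖ + 1)
  have hbdd : ∀ᶠ q' in 𝓝 q, m q' ∈ Metric.closedBall 0 C := by
    filter_upwards [Metric.ball_mem_nhds q one_pos] with q' hq'
    rw [mem_closedBall_zero_iff]
    refine hC q' _ ?_ (hm q')
    linarith [norm_le_norm_add_norm_sub' q' q, (mem_ball_iff_norm.mp hq').le]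
  refine (isCompact_closedBall 0 C).tendsto_nhds_of_unique_mapClusterPt hbdd fun a _ ha => ?_
  have hgraph := (isClosed_setOf_isMinOn_sub_inner h1.continuous).mem_of_mapClusterPt
    (ha.prodMk_of_tendsto tendsto_id) (Eventually.of_forall hm)
  exact h1.eq_of_isMinOn_sub_inner hgraph (hm q)

theorem convConj_eq_of_isMinOn {q x : Euc d} (hx : IsMinOn (fun y => h y - ⟪y, q⟫) univ x) :
    convConj h q = ⟪x, q⟫ - h x :=
  ciSup_eq_of_forall_le_of_forall_lt_exists_gt
    (fun y => by linarith [isMinOn_univ_iff.mp hx y]) fun _ hw => ⟨x, hw⟩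

theorem inner_le_convConj_sub {q q' x : Euc d} (hx : IsMinOn (fun y => h y - ⟪y, q⟫) univ x)
    (hx' : IsMinOn (fun y => h y - ⟪y, q'⟫) univ x') :
    ⟪x, q' - q⟫ ≤ convConj h q' - convConj h q := by
  rw [convConj_eq_of_isMinOn hx, convConj_eq_of_isMinOn hx', inner_sub_right]
  linarith [isMinOn_univ_iff.mp hx' x]

theorem abs_convConj_sub_sub_inner_le {q q' x x' : Euc d}
    (hx : IsMinOn (fun y => h y - ⟪y, q⟫) univ x)
    (hx' : IsMinOn (fun y => h y - ⟪y, q'⟫) univ x') :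
    |convConj h q' - convConj h q - ⟪x, q' - q⟫| ≤ ‖x' - x‖ * ‖q' - q‖ := by
  have hlow := inner_le_convConj_sub hx hx'
  have hupp := inner_le_convConj_sub hx' hx
  rw [← neg_sub q' q, inner_neg_right] at hupp
  have := real_inner_le_norm (x' - x) (q' - q)
  rw [inner_sub_left] at this
  rw [abs_le]
  constructor <;> linarith

theorem H1.hasGradientAt_convConj (h1 : H1 h) (h3 : H3 h) {q x : Euc d}
    (hx : IsMinOn (fun y => h y - ⟪y, q⟫) univ x) : HasGradientAt (convConj h) x q := by
  choose m hm using exists_isMinOn_sub_inner h1 h3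
  obtain rfl : m q = x := h1.eq_of_isMinOn_sub_inner (hm q) hx
  rw [hasGradientAt_iff_hasFDerivAt, hasFDerivAt_iff_isLittleO_nhds_zero,
    Asymptotics.isLittleO_iff]
  intro c hc
  have hm0 : Tendsto (fun w => m (q + w)) (𝓝 0) (𝓝 (m q)) :=
    (h1.continuousAt_of_isMinOn_sub_inner h3 hm q).tendsto.comp
      (by simpa using (continuous_const_add q).tendsto (0 : Euc d))
  filter_upwards [(Metric.tendsto_nhds.mp hm0) c hc] with w hw
  have := abs_convConj_sub_sub_inner_le (hm q) (hm (q + w))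
  rw [add_sub_cancel_left, ← dist_eq_norm] at this
  rw [InnerProductSpace.toDual_apply_apply, Real.norm_eq_abs]
  exact this.trans (by gcongr)

theorem H1.inner_le_cost_sub_cost_gradient_convConj (h1 : H1 h) (h3 : H3 h) (q u x : Euc d) :
    ⟪x - u, q⟫ ≤
      cost h x (u - gradient (convConj h) q) - cost h u (u - gradient (convConj h) q) := by
  obtain ⟨g, hg⟩ := exists_isMinOn_sub_inner h1 h3 q
  rw [(h1.hasGradientAt_convConj h3 hg).gradient, cost, cost, sub_sub_cancel,
    show x - (u - g) = g + (x - u) by abel]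
  have := isMinOn_univ_iff.mp hg (g + (x - u))
  rw [inner_add_left] at this
  linarith

end ConvexConjugate

section CSuperdifferential

variable {d : ℕ} {h : Euc d → ℝ} {f : Euc d → EReal}

theorem Continuous.exists_cost_sub_cost_le (hc : Continuous h) (r : ℝ) :
    ∃ B, ∀ x u y : Euc d, ‖x‖ ≤ r → ‖u‖ ≤ r → ‖y‖ ≤ r → cost h x y - cost h u y ≤ B := by
  obtain ⟨B, hB⟩ :=
    (isCompact_closedBall (0 : Euc d) (2 * r)).exists_bound_of_continuousOn hc.continuousOn
  refine ⟨2 * B, fun x u y hx hu hy => ?_⟩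
  have hxy := hB (x - y) (mem_closedBall_zero_iff.mpr (by linarith [norm_sub_le x y]))
  have huy := hB (u - y) (mem_closedBall_zero_iff.mpr (by linarith [norm_sub_le u y]))
  rw [Real.norm_eq_abs, abs_le] at hxy huy
  simp only [cost]
  linarith

theorem IsCConcave.ne_top (hf : IsCConcave h f) (x : Euc d) : f x ≠ ⊤ := by
  obtain ⟨T, ⟨p, hp⟩, hT⟩ := hf
  rw [hT x]
  exact ne_top_of_le_ne_top (EReal.coe_ne_top _) (iInf₂_le p hp)

theorem eq_bot_of_mem_CSuperdiffAt {x y : Euc d} (hy : y ∈ CSuperdiffAt h f x) (hx : f x = ⊥) :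
    f = ⊥ :=
  funext fun z => le_bot_iff.mp (by simpa [hx] using hy z)

theorem CSuperdiffAt_bot (x : Euc d) : CSuperdiffAt h ⊥ x = univ :=
  eq_univ_of_forall fun _ _ => bot_le

theorem cost_add_cost_le_of_mem_CSuperdiffAt {u x y y' : Euc d} (hy : y ∈ CSuperdiffAt h f u)
    (hy' : y' ∈ CSuperdiffAt h f x) (hu : f u ≠ ⊥) (hu' : f u ≠ ⊤) (hx : f x ≠ ⊥)
    (hx' : f x ≠ ⊤) : cost h u y + cost h x y' ≤ cost h u y' + cost h x y := by
  have hux := hy x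
  have hxu := hy' u
  rw [← EReal.coe_toReal hu' hu, ← EReal.coe_toReal hx' hx] at hux hxu
  norm_cast at hux hxu
  linarith

variable {Q P' : Measure (Euc d)}

theorem IsKantorovichPotential.ne_bot_of_mem_CSuperdiffAt [Nontrivial (Euc d)] [NeZero Q]
    (hf : IsKantorovichPotential h Q P' f) {x y : Euc d} (hy : y ∈ CSuperdiffAt h f x) :
    f x ≠ ⊥ := by
  intro hx
  obtain ⟨-, T, hT, -⟩ := hf
  obtain ⟨x', hx'⟩ := hT.exists
  rw [eq_bot_of_mem_CSuperdiffAt hy hx, CSuperdiffAt_bot] at hx'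
  exact not_subsingleton (Euc d) (subsingleton_univ_iff.mp (hx' ▸ subsingleton_singleton))

theorem IsKantorovichPotential.cost_add_cost_le [Nontrivial (Euc d)] [NeZero Q]
    (hf : IsKantorovichPotential h Q P' f) {u x y y' : Euc d} (hy : y ∈ CSuperdiffAt h f u)
    (hy' : y' ∈ CSuperdiffAt h f x) : cost h u y + cost h x y' ≤ cost h u y' + cost h x y :=
  cost_add_cost_le_of_mem_CSuperdiffAt hy hy' (hf.ne_bot_of_mem_CSuperdiffAt hy) (hf.1.ne_top u)
    (hf.ne_bot_of_mem_CSuperdiffAt hy') (hf.1.ne_top x)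

theorem IsKantorovichPotential.exists_CSuperdiffAt_eq_singleton
    (hf : IsKantorovichPotential h Q P' f) {S : Set (Euc d)} {z : Euc d} (hS : Q S < P' {z}) :
    ∃ x ∉ S, CSuperdiffAt h f x = {z} := by
  obtain ⟨-, T, hT, hmap⟩ := hf
  have hT_meas : AEMeasurable T Q :=
    .of_map_ne_zero fun h0 => by simp [hmap ▸ h0] at hS
  have hpre : Q (T ⁻¹' {z}) = P' {z} := by
    rw [← hmap, Measure.map_apply_of_aemeasurable hT_meas (measurableSet_singleton z)]
  have hdiff : Q (T ⁻¹' {z} \ S) ≠ 0 :=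
    ((tsub_pos_of_lt (hpre ▸ hS)).trans_le le_measure_sdiff).ne'
  obtain ⟨x, ⟨hxz, hxS⟩, hx⟩ :=
    Measure.exists_mem_of_measure_ne_zero_of_ae hdiff (ae_restrict_of_ae hT)
  exact ⟨x, hxS, hx.trans (congrArg _ hxz)⟩

theorem IsKantorovichPotential.exists_inner_le_cost_sub_cost [Nontrivial (Euc d)] [NeZero Q]
    (h1 : H1 h) (h3 : H3 h) (hf : IsKantorovichPotential h Q P' f) {q u y z : Euc d}
    (hz : z = u - gradient (convConj h) q) {S : Set (Euc d)} (hS : Q S < P' {z})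
    (hy : y ∈ CSuperdiffAt h f u) : ∃ x ∉ S, ⟪x - u, q⟫ ≤ cost h x y - cost h u y := by
  obtain ⟨x, hxS, hxz⟩ := hf.exists_CSuperdiffAt_eq_singleton hS
  have hmono := hf.cost_add_cost_le hy (hxz ▸ mem_singleton z)
  have hgrad := h1.inner_le_cost_sub_cost_gradient_convConj h3 q u x
  rw [← hz] at hgrad
  exact ⟨x, hxS, by linarith⟩

end CSuperdifferential

theorem upper_bound_lemma_general (d : ℕ) (hd : 1 ≤ d) (h : Euc d → ℝ)
    (h1 : H1 h) (h3 : H3 h)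
    (Q P : Measure (Euc d)) [IsProbabilityMeasure Q]
    (u : Euc d) (ε α : ℝ) (hε : ε ∈ Set.Ioo (0 : ℝ) 1) (hα : 0 < α)
    (hTD : tukeyDepth Q u = ENNReal.ofReal (ε - α))
    (v : Euc d)
    (hvatt : Q {x : Euc d | ⟪v, x - u⟫ ≤ 0} = tukeyDepth Q u)
    (z : ℕ → Euc d) (hz : ∀ n : ℕ, z n = u - gradient (convConj h) ((n : ℝ) • v))
    (f : ℕ → Euc d → EReal)
    (hf : ∀ n : ℕ, IsKantorovichPotential h Q
      (ENNReal.ofReal (1 - ε) • P + ENNReal.ofReal ε • Measure.dirac (z n)) (f n)) :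
    EscapesToHorizon fun n => CSuperdiffAt h (f n) u := by
  have : Nonempty (Fin d) := ⟨⟨0, hd⟩⟩
  have hhalf : Q {x | ⟪v, x - u⟫ ≤ 0} < ENNReal.ofReal ε := by
    rw [hvatt, hTD]
    exact (ENNReal.ofReal_lt_ofReal_iff hε.1).mpr (by linarith)
  obtain ⟨δ, hδ, hbad⟩ := exists_pos_measure_union_closedBall_compl_lt Q
    (by fun_prop : Measurable fun x => ⟪v, x - u⟫) 0 hhalf
  intro R hR
  obtain ⟨B, hB⟩ := h1.continuous.exists_cost_sub_cost_le (δ⁻¹ + ‖u‖ + R)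
  obtain ⟨N, hN⟩ := exists_nat_gt (B / δ)
  refine ⟨N, fun n hn y hy => not_lt.mp fun hyR => ?_⟩
  obtain ⟨x, hx, hxy⟩ := (hf n).exists_inner_le_cost_sub_cost h1 h3 (hz n)
    (hbad.trans_le (by simp)) hy
  simp only [mem_union, mem_ofPred_eq, mem_compl_iff, mem_closedBall_zero_iff, not_or,
    not_le] at hx
  have hNn : (N : ℝ) ≤ n := by exact_mod_cast hn
  have hδR : 0 ≤ δ⁻¹ := inv_nonneg.mpr hδ.le
  have : B < B := calc
    B < N * δ := (div_lt_iff₀ hδ).mp hN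
    _ ≤ n * ⟪v, x - u⟫ := by gcongr; exact hx.1.le
    _ = ⟪x - u, (n : ℝ) • v⟫ := by rw [real_inner_smul_right, real_inner_comm]
    _ ≤ cost h x y - cost h u y := hxy
    _ ≤ B := hB x u y (by linarith [norm_nonneg u]) (by linarith) (by linarith [norm_nonneg u])
  exact lt_irrefl _ this

/-- upper bound lemma: with `TD(u;Q) = ε - α`, `v_u` attaining the Tukey depth
infimum, and `z_n = u - ∇h*(n v_u)`, for any Kantorovich potentials `f_n` for
`(Q, (1-ε)P + ε δ_{z_n})`, the sets `{∂^c f_n(u)}` escape to the horizon. -/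
theorem upper_bound_lemma (d : ℕ) (hd : 1 ≤ d) (h : Euc d → ℝ)
    (hpos : ∀ x, 0 ≤ h x) (h1 : H1 h) (h2 : H2 h) (h3 : H3 h)
    (Q P : Measure (Euc d)) [IsProbabilityMeasure Q] [IsProbabilityMeasure P]
    (hQ : Q ≪ volume) (hbd : Q (frontier (measSupport Q)) = 0)
    (u : Euc d) (ε α : ℝ) (hε : ε ∈ Set.Ioo (0 : ℝ) 1) (hα : 0 < α)
    (hTD : tukeyDepth Q u = ENNReal.ofReal (ε - α))
    (v : Euc d) (hv : ‖v‖ = 1)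
    (hvatt : Q {x : Euc d | ⟪v, x - u⟫ ≤ 0} = tukeyDepth Q u)
    (z : ℕ → Euc d) (hz : ∀ n : ℕ, z n = u - gradient (convConj h) ((n : ℝ) • v))
    (f : ℕ → Euc d → EReal)
    (hf : ∀ n : ℕ, IsKantorovichPotential h Q
      (ENNReal.ofReal (1 - ε) • P + ENNReal.ofReal ε • Measure.dirac (z n)) (f n)) :
    EscapesToHorizon fun n => CSuperdiffAt h (f n) u :=
  upper_bound_lemma_general d hd h h1 h3 Q P u ε α hε hα hTD v hvatt z hz f hf
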